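/- arXiv:2309.08370 — 2 statements merged into one kernel-verified Lean document; each statement's English description precedes it below -/
import Mathlib

section
/- For an integer t ≥ 3, if e1 and e2 are two non-adjacent edges of the complete bipartite graph K_{t,t}, then the number of copies of the path P_5 in K_{t,t} containing both e1 and e2 is exactly 6(t-2). -/
/-!
A copy of `P₅` in `K_{α,β}` alternates between the two sides, so it is `u₀ - b - u₁ - b' - u₂`
with `uᵢ ∈ α` and `b, b' ∈ β`, or the same with the sides exchanged; and a copy is determined by
this tuple up to reversal, since the only automorphisms of a path are the identity and the
reversal. If the path contains the disjoint edges `a₁b₁`, `a₂b₂` and has three vertices in `α`,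
its vertices in `β` are `b₁, b₂`; orienting it so that `b₁` comes first forces `a₁ ∈ {u₀, u₁}` and
`a₂ ∈ {u₁, u₂}`, so `(u₀, u₁, u₂)` is `(a₁, a₂)` with a third vertex of `α` inserted in one of three
places. This gives `3 (|α| - 2)` paths, and symmetrically `3 (|β| - 2)` with three vertices in `β`.
-/

open SimpleGraph Function Sum

section PathTriples

variable {α : Type*}

/-- The possible outer vertices `u 0, u 1, u 2` of a path `u 0 - b₁ - u 1 - b₂ - u 2` through the
edges `a b₁` and `b b₂` of a complete bipartite graph. -/
def PathTriples (a b : α) : Set (Fin 3 → α) :=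
  {u | Injective u ∧ (u 0 = a ∨ u 1 = a) ∧ (u 1 = b ∨ u 2 = b)}

def insertIntoPair (a b : α) : Fin 3 → α → Fin 3 → α :=
  ![fun x ↦ ![x, a, b], fun x ↦ ![a, x, b], fun x ↦ ![a, b, x]]

lemma insertIntoPair_mem_pathTriples {a b x : α} (hab : a ≠ b) (hx : x ≠ a ∧ x ≠ b) (k : Fin 3) :
    insertIntoPair a b k x ∈ PathTriples a b := by
  refine ⟨fun i j h ↦ ?_, ?_⟩ <;> fin_cases k
  all_goals first
    | simp [insertIntoPair]
    | fin_cases i <;> fin_cases j <;> simp_all [insertIntoPair, eq_comm]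

lemma insertIntoPair_injective {a b : α} :
    Injective fun p : Fin 3 × {x // x ≠ a ∧ x ≠ b} ↦ insertIntoPair a b p.1 p.2 := by
  rintro ⟨k, x, hx⟩ ⟨l, y, hy⟩ h
  have h0 := congrFun h 0
  have h1 := congrFun h 1
  have h2 := congrFun h 2
  fin_cases k <;> fin_cases l <;> simp [insertIntoPair] at h0 h1 h2 <;> grind

lemma exists_insertIntoPair_of_mem_pathTriples {a b : α} (hab : a ≠ b) {u : Fin 3 → α}
    (hu : u ∈ PathTriples a b) :
    ∃ (k : Fin 3) (x : α), (x ≠ a ∧ x ≠ b) ∧ insertIntoPair a b k x = u := by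
  obtain ⟨hinj, ha | ha, hb | hb⟩ := hu
  · exact ⟨2, u 2, ⟨ha ▸ hinj.ne (by decide), hb ▸ hinj.ne (by decide)⟩,
      by ext i; fin_cases i <;> simp [insertIntoPair, ha, hb]⟩
  · exact ⟨1, u 1, ⟨ha ▸ hinj.ne (by decide), hb ▸ hinj.ne (by decide)⟩,
      by ext i; fin_cases i <;> simp [insertIntoPair, ha, hb]⟩
  · exact absurd (ha.symm.trans hb) hab
  · exact ⟨0, u 0, ⟨ha ▸ hinj.ne (by decide), hb ▸ hinj.ne (by decide)⟩,
      by ext i; fin_cases i <;> simp [insertIntoPair, ha, hb]⟩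

noncomputable def pathTriplesEquiv {a b : α} (hab : a ≠ b) :
    Fin 3 × {x // x ≠ a ∧ x ≠ b} ≃ PathTriples a b :=
  Equiv.ofBijective
    (fun p ↦ ⟨insertIntoPair a b p.1 p.2, insertIntoPair_mem_pathTriples hab p.2.2 p.1⟩)
    ⟨fun _ _ h ↦ insertIntoPair_injective (congrArg Subtype.val h), fun u ↦ by
      obtain ⟨k, x, hx, h⟩ := exists_insertIntoPair_of_mem_pathTriples hab u.2
      exact ⟨(k, ⟨x, hx⟩), Subtype.ext h⟩⟩

lemma card_pathTriples [Finite α] {a b : α} (hab : a ≠ b) :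
    Nat.card (PathTriples a b) = 3 * (Nat.card α - 2) := by
  classical
  have := Fintype.ofFinite α
  rw [← Nat.card_congr (pathTriplesEquiv hab), Nat.card_prod, Nat.card_fin]
  simp only [Nat.card_eq_fintype_card]
  rw [Fintype.card_subtype, ← Finset.card_pair hab, ← Finset.card_compl]
  congr 2
  ext x
  simp

end PathTriples

namespace SimpleGraph.pathGraph

variable {n : ℕ}

lemma adj_rev {i j : Fin n} : (pathGraph n).Adj i.rev j.rev ↔ (pathGraph n).Adj i j := by
  simp only [pathGraph_adj, Fin.val_rev]
  omega

def revIso (n : ℕ) : pathGraph n ≃g pathGraph n :=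
  ⟨Fin.revPerm, adj_rev⟩

@[simp] lemma revIso_apply (i : Fin n) : revIso n i = i.rev := rfl

/-- Adjacent vertices have adjacent images, and by injectivity the image never steps back, so it
moves forward along the whole path as it does on the first edge. -/
lemma iso_eq_id_of_map_zero_lt_map_one (σ : pathGraph (n + 2) ≃g pathGraph (n + 2))
    (h01 : σ 0 < σ 1) : ⇑σ = id := by
  have step (i j : Fin (n + 2)) (hij : (i : ℕ) + 1 = j) :
      (σ i : ℕ) + 1 = σ j ∨ (σ j : ℕ) + 1 = σ i :=
    pathGraph_adj.mp (σ.map_adj_iff.mpr (pathGraph_adj.mpr (Or.inl hij)))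
  have h : (σ 0 : ℕ) + 1 = σ 1 := by
    have := Fin.lt_def.mp h01
    rcases step 0 1 rfl with h | h <;> omega
  have shift : ∀ k (hk : k < n + 2), (σ ⟨k, hk⟩ : ℕ) = σ 0 + k := by
    intro k
    induction k using Nat.strong_induction_on with
    | _ k ih =>
      intro hk
      match k, ih with
      | 0, _ => rfl
      | 1, _ => exact h.symm
      | k + 2, ih =>
        have h1 := ih (k + 1) (by omega) (by omega)
        have h0 := ih k (by omega) (by omega)
        rcases step ⟨k + 1, by omega⟩ ⟨k + 2, hk⟩ rfl with h2 | h2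
        · omega
        · have : σ ⟨k + 2, hk⟩ = σ ⟨k, by omega⟩ := Fin.ext (by omega)
          simpa using σ.injective this
  have h0 : (σ 0 : ℕ) = 0 := by
    have := shift (n + 1) (by omega)
    have := (σ ⟨n + 1, by omega⟩).isLt
    omega
  funext i
  exact Fin.ext ((shift i i.isLt).trans (by simp [h0]))

lemma iso_eq_id_or_rev (σ : pathGraph n ≃g pathGraph n) : ⇑σ = id ∨ ⇑σ = Fin.rev := by
  match n, σ with
  | 0, σ => exact Or.inl (funext fun i ↦ i.elim0)
  | 1, σ => exact Or.inl (funext fun i ↦ Subsingleton.elim _ _)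
  | n + 2, σ =>
    rcases lt_or_gt_of_ne (σ.injective.ne (Fin.zero_ne_one : (0 : Fin (n + 2)) ≠ 1)) with h | h
    · exact Or.inl (iso_eq_id_of_map_zero_lt_map_one σ h)
    · have hrev := iso_eq_id_of_map_zero_lt_map_one (σ.trans (revIso _)) (by
        simpa only [RelIso.trans_apply, revIso_apply] using Fin.rev_lt_rev.mpr h)
      right
      funext i
      simpa using congrArg Fin.rev (congrFun hrev i)

end SimpleGraph.pathGraph

namespace SimpleGraph.Copy

variable {α V : Type*} {A : SimpleGraph α} {G : SimpleGraph V}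

lemma toSubgraph_comp_iso (f : Copy A G) (σ : A ≃g A) :
    (f.comp σ.toCopy).toSubgraph = f.toSubgraph := by
  ext u v
  · simp only [Subgraph.map_verts, Subgraph.verts_top, Set.image_univ]
    rw [show ⇑(f.comp σ.toCopy).toHom = f ∘ σ from rfl, σ.surjective.range_comp]
    rfl
  · simp only [Subgraph.map_adj, Subgraph.top_adj, Relation.Map]
    constructor
    · rintro ⟨a, b, hab, rfl, rfl⟩
      exact ⟨σ a, σ b, σ.map_adj_iff.mpr hab, rfl, rfl⟩
    · rintro ⟨a, b, hab, rfl, rfl⟩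
      refine ⟨σ.symm a, σ.symm b, σ.symm.map_adj_iff.mpr hab, ?_, ?_⟩ <;> simp [Copy.comp_apply]

lemma exists_iso_of_toSubgraph_eq {f g : Copy A G} (h : f.toSubgraph = g.toSubgraph) :
    ∃ σ : A ≃g A, ∀ a, g (σ a) = f a := by
  suffices ∀ H, H = g.toSubgraph → ∀ e : A ≃g H.coe, (∀ a, (e a : V) = f a) →
      ∃ σ : A ≃g A, ∀ a, g (σ a) = f a from this _ h f.isoToSubgraph fun _ ↦ rfl
  rintro H rfl e he
  refine ⟨e.trans g.isoToSubgraph.symm, fun a ↦ ?_⟩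
  rw [← he]
  exact congrArg Subtype.val (g.isoToSubgraph.apply_symm_apply (e a))

lemma toSubgraph_eq_iff_pathGraph {n : ℕ} {f g : Copy (pathGraph n) G} :
    f.toSubgraph = g.toSubgraph ↔ ⇑g = ⇑f ∨ ⇑g = ⇑f ∘ Fin.rev := by
  constructor
  · intro h
    obtain ⟨σ, hσ⟩ := exists_iso_of_toSubgraph_eq h
    rcases pathGraph.iso_eq_id_or_rev σ with hid | hrev
    · exact Or.inl (funext fun a ↦ by simpa [hid] using hσ a)
    · exact Or.inr (funext fun a ↦ by simpa [hrev] using hσ a.rev)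
  · rintro (h | h)
    · rw [DFunLike.coe_injective h]
    · rw [show g = f.comp (pathGraph.revIso n).toCopy from DFunLike.coe_injective h,
        toSubgraph_comp_iso]

lemma mem_toSubgraph_edgeSet_pathGraph {n : ℕ} (f : Copy (pathGraph (n + 1)) G) {e : Sym2 V} :
    e ∈ f.toSubgraph.edgeSet ↔ ∃ i : Fin n, s(f i.castSucc, f i.succ) = e := by
  have consecutive {a b : Fin (n + 1)} (h : a.val + 1 = b) :
      ∃ i : Fin n, i.castSucc = a ∧ i.succ = b :=
    ⟨⟨a, by omega⟩, rfl, Fin.ext (by simp [h])⟩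
  simp only [Subgraph.edgeSet_map, Subgraph.edgeSet_top, Set.mem_image]
  constructor
  · rintro ⟨⟨a, b⟩, hab, rfl⟩
    rcases pathGraph_adj.mp hab with h | h
    · obtain ⟨i, rfl, rfl⟩ := consecutive h
      exact ⟨i, rfl⟩
    · obtain ⟨i, rfl, rfl⟩ := consecutive h
      exact ⟨i, Sym2.eq_swap⟩
  · rintro ⟨i, rfl⟩
    exact ⟨s(i.castSucc, i.succ), pathGraph_adj.mpr (Or.inl (by simp)), rfl⟩

end SimpleGraph.Copy

section CompleteBipartite

variable {α β : Type*}

def zigzag (u : Fin 3 → α) (v : Fin 2 → β) : Fin 5 → α ⊕ β :=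
  ![inl (u 0), inr (v 0), inl (u 1), inr (v 1), inl (u 2)]

section zigzag
variable {u u' : Fin 3 → α} {v v' : Fin 2 → β}

lemma pair_comp_rev {γ : Type*} (x y : γ) : ![x, y] ∘ Fin.rev = ![y, x] := by
  funext i; fin_cases i <;> rfl

lemma zigzag_comp_rev : zigzag u v ∘ Fin.rev = zigzag (u ∘ Fin.rev) (v ∘ Fin.rev) := by
  funext i; fin_cases i <;> rfl

lemma zigzag_injective_iff : Injective (zigzag u v) ↔ Injective u ∧ Injective v := by
  refine ⟨fun h ↦ ⟨?_, ?_⟩, fun ⟨hu, hv⟩ i j hij ↦ ?_⟩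
  · have : inl ∘ u = zigzag u v ∘ ![0, 2, 4] := by funext i; fin_cases i <;> rfl
    exact (this ▸ h.comp (by decide : Injective ![(0 : Fin 5), 2, 4])).of_comp
  · have : inr ∘ v = zigzag u v ∘ ![1, 3] := by funext i; fin_cases i <;> rfl
    exact (this ▸ h.comp (by decide : Injective ![(1 : Fin 5), 3])).of_comp
  · fin_cases i <;> fin_cases j <;> simp_all [zigzag, hu.eq_iff, hv.eq_iff]

lemma zigzag_inj : zigzag u v = zigzag u' v' ↔ u = u' ∧ v = v' := by
  simp [zigzag, funext_iff, Fin.forall_fin_succ]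
  tauto

lemma zigzag_ne_swap_comp {u' : Fin 3 → β} {v' : Fin 2 → α} :
    zigzag u v ≠ Sum.swap ∘ zigzag u' v' := fun h ↦ by
  simpa [zigzag] using congrFun h 0

lemma exists_zigzag_edge_iff {a : α} {b : β} :
    (∃ i : Fin 4, s(zigzag u v i.castSucc, zigzag u v i.succ) = s(inl a, inr b)) ↔
      (a = u 0 ∨ a = u 1) ∧ b = v 0 ∨ (a = u 1 ∨ a = u 2) ∧ b = v 1 := by
  simp [Fin.exists_fin_succ, zigzag]
  tauto

lemma exists_swap_zigzag_edge_iff {u : Fin 3 → β} {v : Fin 2 → α} {a : α} {b : β} :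
    (∃ i : Fin 4, s((zigzag u v i.castSucc).swap, (zigzag u v i.succ).swap) = s(inl a, inr b)) ↔
      (b = u 0 ∨ b = u 1) ∧ a = v 0 ∨ (b = u 1 ∨ b = u 2) ∧ a = v 1 := by
  simp [Fin.exists_fin_succ, zigzag]
  tauto

lemma zigzag_orientation {a₁ a₂ : α} {b₁ b₂ : β} (hb : b₁ ≠ b₂) (hu : Injective u)
    (h₁ : (a₁ = u 0 ∨ a₁ = u 1) ∧ b₁ = v 0 ∨ (a₁ = u 1 ∨ a₁ = u 2) ∧ b₁ = v 1)
    (h₂ : (a₂ = u 0 ∨ a₂ = u 1) ∧ b₂ = v 0 ∨ (a₂ = u 1 ∨ a₂ = u 2) ∧ b₂ = v 1) :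
    v = ![b₁, b₂] ∧ u ∈ PathTriples a₁ a₂ ∨ v = ![b₂, b₁] ∧ u ∘ Fin.rev ∈ PathTriples a₁ a₂ := by
  have hv : ∀ c d, v = ![c, d] ↔ v 0 = c ∧ v 1 = d := fun c d ↦ by
    simp [funext_iff, Fin.forall_fin_succ]
  simp only [PathTriples, Set.mem_ofPred_eq, hv, comp_apply, Fin.isValue]
  rcases h₁ with ⟨ha₁, rfl⟩ | ⟨ha₁, rfl⟩ <;> rcases h₂ with ⟨ha₂, rfl⟩ | ⟨ha₂, rfl⟩
  · exact absurd rfl hb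
  · exact Or.inl ⟨⟨rfl, rfl⟩, hu, by tauto⟩
  · exact Or.inr ⟨⟨rfl, rfl⟩, hu.comp Fin.rev_injective, by simp; tauto⟩
  · exact absurd rfl hb

lemma exists_zigzag_of_adj {w : Fin 5 → α ⊕ β}
    (hw : ∀ i : Fin 4, (completeBipartiteGraph α β).Adj (w i.castSucc) (w i.succ)) :
    (∃ u v, w = zigzag u v) ∨ ∃ u v, w = Sum.swap ∘ zigzag u v := by
  obtain ⟨x₀, x₁, x₂, x₃, x₄, rfl⟩ : ∃ x₀ x₁ x₂ x₃ x₄, w = ![x₀, x₁, x₂, x₃, x₄] :=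
    ⟨_, _, _, _, _, by funext i; fin_cases i <;> rfl⟩
  simp only [Fin.forall_fin_succ, IsEmpty.forall_iff, and_true] at hw
  rcases x₀ with x₀ | x₀ <;> rcases x₁ with x₁ | x₁ <;> rcases x₂ with x₂ | x₂ <;>
    rcases x₃ with x₃ | x₃ <;> rcases x₄ with x₄ | x₄ <;> simp at hw
  · exact Or.inl ⟨![x₀, x₂, x₄], ![x₁, x₃], rfl⟩
  · exact Or.inr ⟨![x₀, x₂, x₄], ![x₁, x₃], by funext i; fin_cases i <;> rfl⟩

end zigzag

def zigzagCopy {u : Fin 3 → α} {v : Fin 2 → β} (hu : Injective u) (hv : Injective v) :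
    Copy (pathGraph 5) (completeBipartiteGraph α β) :=
  ⟨⟨zigzag u v, fun {i j} h ↦ by
    fin_cases i <;> fin_cases j <;> simp_all [pathGraph_adj, zigzag]⟩,
    zigzag_injective_iff.mpr ⟨hu, hv⟩⟩

@[simp] lemma coe_zigzagCopy {u : Fin 3 → α} {v : Fin 2 → β} (hu : Injective u)
    (hv : Injective v) : ⇑(zigzagCopy hu hv) = zigzag u v := rfl

def completeBipartiteGraphComm : completeBipartiteGraph β α ≃g completeBipartiteGraph α β :=
  ⟨Equiv.sumComm β α, by simp⟩

def swapZigzagCopy {u : Fin 3 → β} {v : Fin 2 → α} (hu : Injective u) (hv : Injective v) :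
    Copy (pathGraph 5) (completeBipartiteGraph α β) :=
  completeBipartiteGraphComm.toCopy.comp (zigzagCopy hu hv)

@[simp] lemma coe_swapZigzagCopy {u : Fin 3 → β} {v : Fin 2 → α} (hu : Injective u)
    (hv : Injective v) : ⇑(swapZigzagCopy hu hv) = Sum.swap ∘ zigzag u v := rfl

section PathsThrough

variable {a₁ a₂ : α} {b₁ b₂ : β}

/-- A path with three vertices in `α` is `u 0 - b₁ - u 1 - b₂ - u 2`, one with three vertices in
`β` is `v 0 - a₁ - v 1 - a₂ - v 2`: of the two orientations of a path we list the one in which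
`b₁` (resp. `a₁`) comes before `b₂` (resp. `a₂`). -/
def pathsThrough (ha : a₁ ≠ a₂) (hb : b₁ ≠ b₂) :
    PathTriples a₁ a₂ ⊕ PathTriples b₁ b₂ → (completeBipartiteGraph α β).Subgraph
  | inl u => (zigzagCopy u.2.1 (injective_pair_iff_ne.mpr hb)).toSubgraph
  | inr v => (swapZigzagCopy v.2.1 (injective_pair_iff_ne.mpr ha)).toSubgraph

lemma pathsThrough_injective (ha : a₁ ≠ a₂) (hb : b₁ ≠ b₂) :
    Injective (pathsThrough ha hb) := by
  rintro (u | u) (u' | u') h <;>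
    rcases Copy.toSubgraph_eq_iff_pathGraph.mp h with h | h <;>
    simp only [coe_zigzagCopy, coe_swapZigzagCopy, comp_assoc, zigzag_comp_rev,
      Sum.swap_leftInverse.injective.comp_left.eq_iff, zigzag_inj] at h
  all_goals first
    | exact absurd h zigzag_ne_swap_comp
    | exact absurd h.symm zigzag_ne_swap_comp
    | exact congrArg _ (Subtype.ext h.1.symm)
    | exact absurd (by simpa using congrFun h.2 0) hb
    | exact absurd (by simpa using congrFun h.2 0) ha

lemma pathsThrough_spec (ha : a₁ ≠ a₂) (hb : b₁ ≠ b₂) (p : PathTriples a₁ a₂ ⊕ PathTriples b₁ b₂) :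
    Nonempty ((pathsThrough ha hb p).coe ≃g pathGraph 5) ∧
      s(inl a₁, inr b₁) ∈ (pathsThrough ha hb p).edgeSet ∧
      s(inl a₂, inr b₂) ∈ (pathsThrough ha hb p).edgeSet := by
  rcases p with u | u <;> obtain ⟨-, hu₁, hu₂⟩ := u.2 <;>
    refine ⟨⟨(Copy.isoToSubgraph _).symm⟩, ?_⟩ <;>
    simp only [pathsThrough, Copy.mem_toSubgraph_edgeSet_pathGraph]
  · exact ⟨exists_zigzag_edge_iff.mpr (by simp; tauto),
      exists_zigzag_edge_iff.mpr (by simp; tauto)⟩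
  · exact ⟨exists_swap_zigzag_edge_iff.mpr (by simp; tauto),
      exists_swap_zigzag_edge_iff.mpr (by simp; tauto)⟩

lemma toSubgraph_mem_range_pathsThrough (ha : a₁ ≠ a₂) (hb : b₁ ≠ b₂)
    (f : Copy (pathGraph 5) (completeBipartiteGraph α β))
    (h₁ : ∃ i : Fin 4, s(f i.castSucc, f i.succ) = s(inl a₁, inr b₁))
    (h₂ : ∃ i : Fin 4, s(f i.castSucc, f i.succ) = s(inl a₂, inr b₂)) :
    f.toSubgraph ∈ Set.range (pathsThrough ha hb) := by
  have hadj (i : Fin 4) := f.toHom.map_adj (pathGraph_adj.mpr (Or.inl (by simp) :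
    (i.castSucc : ℕ) + 1 = i.succ ∨ _))
  rcases exists_zigzag_of_adj (w := f) hadj with ⟨u, v, hf⟩ | ⟨u, v, hf⟩
  · rw [hf, exists_zigzag_edge_iff] at h₁ h₂
    have hu := (zigzag_injective_iff.mp (hf ▸ f.injective)).1
    rcases zigzag_orientation hb hu h₁ h₂ with ⟨rfl, hu'⟩ | ⟨rfl, hu'⟩
    · exact ⟨inl ⟨u, hu'⟩, Copy.toSubgraph_eq_iff_pathGraph.mpr (Or.inl (by simp [hf]))⟩
    · refine ⟨inl ⟨u ∘ Fin.rev, hu'⟩, Copy.toSubgraph_eq_iff_pathGraph.mpr (Or.inr ?_)⟩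
      simp [hf, zigzag_comp_rev, comp_assoc, pair_comp_rev, Fin.rev_involutive.comp_self]
  · simp only [hf, comp_apply, exists_swap_zigzag_edge_iff] at h₁ h₂
    have hu := (zigzag_injective_iff.mp (hf ▸ f.injective).of_comp).1
    rcases zigzag_orientation ha hu h₁ h₂ with ⟨rfl, hu'⟩ | ⟨rfl, hu'⟩
    · exact ⟨inr ⟨u, hu'⟩, Copy.toSubgraph_eq_iff_pathGraph.mpr (Or.inl (by simp [hf]))⟩
    · refine ⟨inr ⟨u ∘ Fin.rev, hu'⟩, Copy.toSubgraph_eq_iff_pathGraph.mpr (Or.inr ?_)⟩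
      simp [hf, zigzag_comp_rev, comp_assoc, pair_comp_rev, Fin.rev_involutive.comp_self]

lemma range_pathsThrough (ha : a₁ ≠ a₂) (hb : b₁ ≠ b₂) :
    Set.range (pathsThrough ha hb) = {H | Nonempty (H.coe ≃g pathGraph 5) ∧
      s(inl a₁, inr b₁) ∈ H.edgeSet ∧ s(inl a₂, inr b₂) ∈ H.edgeSet} := by
  refine Set.Subset.antisymm (Set.range_subset_iff.mpr (pathsThrough_spec ha hb)) ?_
  rintro H ⟨⟨e⟩, h₁, h₂⟩
  obtain ⟨f, rfl⟩ : H ∈ Set.range Copy.toSubgraph := by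
    rw [Copy.range_toSubgraph]
    exact ⟨e.symm⟩
  rw [Copy.mem_toSubgraph_edgeSet_pathGraph] at h₁ h₂
  exact toSubgraph_mem_range_pathsThrough ha hb f h₁ h₂

lemma card_pathGraph_five_through [Finite α] [Finite β] (ha : a₁ ≠ a₂) (hb : b₁ ≠ b₂) :
    Nat.card {H : (completeBipartiteGraph α β).Subgraph // Nonempty (H.coe ≃g pathGraph 5) ∧
      s(inl a₁, inr b₁) ∈ H.edgeSet ∧ s(inl a₂, inr b₂) ∈ H.edgeSet} =
      3 * (Nat.card α - 2) + 3 * (Nat.card β - 2) := by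
  have := Nat.card_range_of_injective (pathsThrough_injective ha hb)
  rw [range_pathsThrough, Nat.card_sum, card_pathTriples ha, card_pathTriples hb] at this
  exact this

end PathsThrough

end CompleteBipartite

theorem stmt_9_general (t : ℕ) (e1 e2 : Sym2 (Fin t ⊕ Fin t))
    (he1 : e1 ∈ (completeBipartiteGraph (Fin t) (Fin t)).edgeSet)
    (he2 : e2 ∈ (completeBipartiteGraph (Fin t) (Fin t)).edgeSet)
    (hnadj : ∀ v : Fin t ⊕ Fin t, ¬(v ∈ e1 ∧ v ∈ e2)) :
    Nat.card {H : (completeBipartiteGraph (Fin t) (Fin t)).Subgraph //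
      Nonempty (H.coe ≃g pathGraph 5) ∧ e1 ∈ H.edgeSet ∧ e2 ∈ H.edgeSet} = 6 * (t - 2) := by
  rw [edgeSet_completeBipartiteGraph] at he1 he2
  obtain ⟨⟨a₁, b₁⟩, rfl⟩ := he1
  obtain ⟨⟨a₂, b₂⟩, rfl⟩ := he2
  have ha : a₁ ≠ a₂ := fun h ↦ hnadj (inl a₁) ⟨by simp, by simp [h]⟩
  have hb : b₁ ≠ b₂ := fun h ↦ hnadj (inr b₁) ⟨by simp, by simp [h]⟩
  rw [card_pathGraph_five_through ha hb, Nat.card_fin]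
  omega

theorem stmt_9 (t : ℕ) (ht : 3 ≤ t) (e1 e2 : Sym2 (Fin t ⊕ Fin t))
    (he1 : e1 ∈ (completeBipartiteGraph (Fin t) (Fin t)).edgeSet)
    (he2 : e2 ∈ (completeBipartiteGraph (Fin t) (Fin t)).edgeSet)
    (hnadj : ∀ v : Fin t ⊕ Fin t, ¬(v ∈ e1 ∧ v ∈ e2)) :
    Nat.card {H : (completeBipartiteGraph (Fin t) (Fin t)).Subgraph //
      Nonempty (H.coe ≃g pathGraph 5) ∧ e1 ∈ H.edgeSet ∧ e2 ∈ H.edgeSet} = 6 * (t - 2) :=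
  stmt_9_general t e1 e2 he1 he2 hnadj
end

section
/- For an integer t ≥ 3, if e1 and e2 are two distinct adjacent edges of the complete bipartite graph K_{t,t}, then the number of copies of the path P_5 in K_{t,t} containing both e1 and e2 is exactly 3(t-1)(t-2). -/
/-!
In a copy of `P₅` through the edges `c b₁` and `c b₂`, these are the two path edges at `c`, so `c`
is an inner vertex of the path. Up to reversal the copy is therefore `x b₁ c b₂ y` with `x ≠ y` on
the side of `c` and different from `c` (`(t-1)(t-2)` choices), or `b₁ c b₂ x y` or `b₂ c b₁ x y`
with `x ≠ c` on the side of `c` and `y ∉ {b₁, b₂}` on the other side (`(t-1)(t-2)` choices each),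
and different parameters give different copies. Swapping the two sides of `K_{t,t}` lets us assume
that `c` lies on the left.
-/

open Function Sum Finset

namespace SimpleGraph

section General

variable {V W U : Type*} {G : SimpleGraph V} {G' : SimpleGraph W}

def pathGraphHomOfAdj {n : ℕ} (v : Fin (n + 1) → V)
    (hv : ∀ i : Fin n, G.Adj (v i.castSucc) (v i.succ)) : pathGraph (n + 1) →g G where
  toFun := v
  map_rel' {i j} h := by
    rcases pathGraph_adj.mp h with h | h
    · obtain ⟨k, rfl, rfl⟩ : ∃ k : Fin n, k.castSucc = i ∧ k.succ = j :=
        ⟨⟨i, by omega⟩, rfl, Fin.ext (by simp [h])⟩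
      exact hv k
    · obtain ⟨k, rfl, rfl⟩ : ∃ k : Fin n, k.castSucc = j ∧ k.succ = i :=
        ⟨⟨j, by omega⟩, rfl, Fin.ext (by simp [h])⟩
      exact (hv k).symm

@[simp]
theorem coe_pathGraphHomOfAdj {n : ℕ} (v : Fin (n + 1) → V)
    (hv : ∀ i : Fin n, G.Adj (v i.castSucc) (v i.succ)) : ⇑(pathGraphHomOfAdj v hv) = v :=
  rfl

def pathGraphRevIso (n : ℕ) : pathGraph n ≃g pathGraph n where
  toEquiv := Fin.revPerm
  map_rel_iff' {i j} := by
    simp only [Fin.revPerm_apply, pathGraph_adj, Fin.val_rev]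
    omega

theorem pathGraph_five_edgeSet :
    (pathGraph 5).edgeSet = {s(0, 1), s(1, 2), s(2, 3), s(3, 4)} := by
  ext ⟨i, j⟩
  fin_cases i <;> fin_cases j <;> simp [pathGraph_adj]

theorem pathGraph_five_eq_of_adj_of_adj {i j j' : Fin 5} (hj : (pathGraph 5).Adj i j)
    (hj' : (pathGraph 5).Adj i j') (hjj : j ≠ j') :
    i = 1 ∧ j = 0 ∧ j' = 2 ∨ i = 1 ∧ j = 2 ∧ j' = 0 ∨ i = 2 ∧ j = 1 ∧ j' = 3 ∨
      i = 2 ∧ j = 3 ∧ j' = 1 ∨ i = 3 ∧ j = 2 ∧ j' = 4 ∨ i = 3 ∧ j = 4 ∧ j' = 2 := by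
  rw [pathGraph_adj] at hj hj'
  revert i j j'
  decide

theorem edgeSet_map_top_pathGraph_five (f : pathGraph 5 →g G) :
    ((⊤ : (pathGraph 5).Subgraph).map f).edgeSet =
      {s(f 0, f 1), s(f 1, f 2), s(f 2, f 3), s(f 3, f 4)} := by
  simp [pathGraph_five_edgeSet, Set.image_insert_eq]

theorem Copy.toSubgraph_comp_iso_s10 {A : SimpleGraph U} (f : Copy A G) (σ : A ≃g A) :
    (f.comp σ.toCopy).toSubgraph = f.toSubgraph := by
  change Subgraph.map (f.toHom.comp σ.toHom) ⊤ = _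
  rw [Subgraph.map_comp, Subgraph.map_iso_top]

def copiesContaining (G : SimpleGraph V) (A : SimpleGraph U) (e₁ e₂ : Sym2 V) :
    Set G.Subgraph :=
  {H | Nonempty (H.coe ≃g A) ∧ e₁ ∈ H.edgeSet ∧ e₂ ∈ H.edgeSet}

theorem copiesContaining_comm (G : SimpleGraph V) (A : SimpleGraph U) (e₁ e₂ : Sym2 V) :
    G.copiesContaining A e₁ e₂ = G.copiesContaining A e₂ e₁ :=
  Set.ext fun _ => and_congr_right' and_comm

def Iso.mapSubgraph (φ : G ≃g G') : G.Subgraph ≃ G'.Subgraph where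
  toFun H := H.map φ.toHom
  invFun H := H.map φ.symm.toHom
  left_inv H := by
    change (H.map φ.toHom).map φ.symm.toHom = H
    rw [← Subgraph.map_comp]
    convert Subgraph.map_id H
    ext; simp
  right_inv H := by
    change (H.map φ.symm.toHom).map φ.toHom = H
    rw [← Subgraph.map_comp]
    convert Subgraph.map_id H
    ext; simp

theorem Iso.natCard_copiesContaining (φ : G ≃g G') (A : SimpleGraph U) (e₁ e₂ : Sym2 V) :
    Nat.card (G'.copiesContaining A (e₁.map φ) (e₂.map φ)) =
      Nat.card (G.copiesContaining A e₁ e₂) := by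
  refine Nat.card_congr (Equiv.subtypeEquiv φ.mapSubgraph fun H => ?_).symm
  have hmem (e : Sym2 V) : e.map φ ∈ (H.map φ.toHom).edgeSet ↔ e ∈ H.edgeSet := by
    rw [Subgraph.edgeSet_map]
    exact (Sym2.map.injective φ.injective).mem_set_image
  have hiso : H.coe ≃g (H.map φ.toHom).coe := φ.toCopy.isoSubgraphMap H
  simp only [copiesContaining, Set.mem_ofPred_eq, Iso.mapSubgraph, Equiv.coe_fn_mk, hmem]
  exact and_congr_left' ⟨fun ⟨ψ⟩ => ⟨hiso.symm.trans ψ⟩, fun ⟨ψ⟩ => ⟨hiso.trans ψ⟩⟩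

theorem nonempty_iso_map_top {A : SimpleGraph U} {f : A →g G} (hf : Injective f) :
    Nonempty (((⊤ : A.Subgraph).map f).coe ≃g A) :=
  ⟨(Copy.isoToSubgraph ⟨f, hf⟩).symm⟩

end General

section CompleteBipartite

variable {α β : Type*}

def completeBipartiteGraphComm (α β : Type*) :
    completeBipartiteGraph α β ≃g completeBipartiteGraph β α where
  toEquiv := Equiv.sumComm α β
  map_rel_iff' {u v} := by cases u <;> cases v <;> simp

theorem map_mk_completeBipartiteGraphComm (a : α) (b : β) :
    s(inl a, inr b).map (completeBipartiteGraphComm α β) = s(inl b, inr a) :=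
  Sym2.eq_swap

theorem exists_eq_inl_of_adj_inr {v : α ⊕ β} {b : β}
    (h : (completeBipartiteGraph α β).Adj v (inr b)) : ∃ x, v = inl x :=
  isLeft_iff.mp (by simpa using h)

theorem exists_eq_inr_of_adj_inl {v : α ⊕ β} {a : α}
    (h : (completeBipartiteGraph α β).Adj v (inl a)) : ∃ y, v = inr y :=
  isRight_iff.mp (by simpa using h)

theorem exists_eq_inl_inr_of_mem_edgeSet {e : Sym2 (α ⊕ β)}
    (he : e ∈ (completeBipartiteGraph α β).edgeSet) : ∃ a b, e = s(inl a, inr b) := by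
  induction e using Sym2.ind with
  | _ u v =>
    rcases u with a | b <;> rcases v with a' | b'
    · simp at he
    · exact ⟨a, b', rfl⟩
    · exact ⟨a', b, Sym2.eq_swap⟩
    · simp at he

def middlePath (a : α) (b₁ b₂ : β) (x y : α) : pathGraph 5 →g completeBipartiteGraph α β :=
  pathGraphHomOfAdj ![inl x, inr b₁, inl a, inr b₂, inl y] (by simp [Fin.forall_fin_succ])

def endPath (a : α) (b₁ b₂ : β) (x : α) (y : β) : pathGraph 5 →g completeBipartiteGraph α β :=
  pathGraphHomOfAdj ![inr b₁, inl a, inr b₂, inl x, inr y] (by simp [Fin.forall_fin_succ])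

variable {a : α} {b₁ b₂ : β}

theorem map_top_middlePath_ne_endPath {x y x' : α} {y' : β} (hy₁ : y' ≠ b₁) (hy₂ : y' ≠ b₂)
    (b b' : β) :
    (⊤ : Subgraph _).map (middlePath a b₁ b₂ x y) ≠ (⊤ : Subgraph _).map (endPath a b b' x' y') := by
  intro h
  have h₁ : s(inl x', inr y') ∈ ((⊤ : Subgraph _).map (middlePath a b₁ b₂ x y)).edgeSet :=
    h ▸ by simp only [edgeSet_map_top_pathGraph_five]; simp [endPath]
  simp only [edgeSet_map_top_pathGraph_five] at h₁
  simp [middlePath, hy₁, hy₂] at h₁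

theorem map_top_endPath_ne_endPath_swap (hb : b₁ ≠ b₂) {x x' : α} {y y' : β} (hx : x ≠ a)
    (hy₂ : y' ≠ b₂) :
    (⊤ : Subgraph _).map (endPath a b₁ b₂ x y) ≠ (⊤ : Subgraph _).map (endPath a b₂ b₁ x' y') := by
  intro h
  have h₁ : s(inr b₂, inl x) ∈ ((⊤ : Subgraph _).map (endPath a b₂ b₁ x' y')).edgeSet :=
    h ▸ by simp only [edgeSet_map_top_pathGraph_five]; simp [endPath]
  simp only [edgeSet_map_top_pathGraph_five] at h₁
  simp [endPath, hx, hb.symm, hy₂.symm] at h₁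

variable [Fintype α] [DecidableEq α]

def middleParams (a : α) : Finset (α × α) :=
  ((univ : Finset α).erase a).offDiag

theorem mem_middleParams {p : α × α} : p ∈ middleParams a ↔ p.1 ≠ a ∧ p.2 ≠ a ∧ p.1 ≠ p.2 := by
  simp [middleParams]

theorem card_middleParams (a : α) :
    #(middleParams a) = (Fintype.card α - 1) * (Fintype.card α - 2) := by
  rw [middleParams, offDiag_card, card_erase_of_mem (mem_univ a), card_univ, ← Nat.mul_sub_one,
    Nat.sub_sub]

theorem injective_middlePath_iff (hb : b₁ ≠ b₂) {x y : α} :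
    Injective (middlePath a b₁ b₂ x y) ↔ (x, y) ∈ middleParams a := by
  simp only [middlePath, coe_pathGraphHomOfAdj, Matrix.vecCons, Fin.cons_injective_iff]
  simp [mem_middleParams, injective_of_subsingleton, hb]
  grind

theorem map_top_middlePath_mem (hb : b₁ ≠ b₂) {p : α × α} (hp : p ∈ middleParams a) :
    (⊤ : Subgraph _).map (middlePath a b₁ b₂ p.1 p.2) ∈
      (completeBipartiteGraph α β).copiesContaining (pathGraph 5)
        s(inl a, inr b₁) s(inl a, inr b₂) :=
  ⟨nonempty_iso_map_top ((injective_middlePath_iff hb).mpr hp),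
    by simp only [edgeSet_map_top_pathGraph_five]; simp [middlePath]⟩

theorem injOn_map_top_middlePath (hb : b₁ ≠ b₂) :
    Set.InjOn (fun p : α × α => (⊤ : Subgraph _).map (middlePath a b₁ b₂ p.1 p.2))
      (middleParams a) := by
  rintro ⟨x, y⟩ hp ⟨x', y'⟩ - h
  obtain ⟨hx, hy, -⟩ := mem_middleParams.mp hp
  dsimp only at h
  have h₁ : s(inl x, inr b₁) ∈ ((⊤ : Subgraph _).map (middlePath a b₁ b₂ x' y')).edgeSet :=
    h ▸ by simp only [edgeSet_map_top_pathGraph_five]; simp [middlePath]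
  have h₂ : s(inr b₂, inl y) ∈ ((⊤ : Subgraph _).map (middlePath a b₁ b₂ x' y')).edgeSet :=
    h ▸ by simp only [edgeSet_map_top_pathGraph_five]; simp [middlePath]
  simp only [edgeSet_map_top_pathGraph_five] at h₁ h₂
  simp [middlePath, hx, hy, hb, hb.symm] at h₁ h₂
  rw [h₁, h₂]

theorem exists_middlePath_eq_toSubgraph (hb : b₁ ≠ b₂)
    (f : Copy (pathGraph 5) (completeBipartiteGraph α β))
    (h₁ : f 1 = inr b₁) (h₂ : f 2 = inl a) (h₃ : f 3 = inr b₂) :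
    ∃ p ∈ middleParams a, (⊤ : Subgraph _).map (middlePath a b₁ b₂ p.1 p.2) = f.toSubgraph := by
  obtain ⟨x, h₀⟩ := exists_eq_inl_of_adj_inr (v := f 0) (b := b₁) <| by
    simpa [h₁] using f.toHom.map_adj (show (pathGraph 5).Adj 0 1 by simp [pathGraph_adj])
  obtain ⟨y, h₄⟩ := exists_eq_inl_of_adj_inr (v := f 4) (b := b₂) <| by
    simpa [h₃] using f.toHom.map_adj (show (pathGraph 5).Adj 4 3 by simp [pathGraph_adj])
  have hf : ⇑(middlePath a b₁ b₂ x y) = f := by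
    ext i
    fin_cases i <;> simp [middlePath, *]
  exact ⟨(x, y), (injective_middlePath_iff hb).mp (hf ▸ f.injective),
    congrArg (Subgraph.map · ⊤) (DFunLike.coe_injective hf)⟩

variable [Fintype β] [DecidableEq β]

def endParams (a : α) (b₁ b₂ : β) : Finset (α × β) :=
  (univ : Finset α).erase a ×ˢ (univ \ {b₁, b₂})

theorem mem_endParams {p : α × β} : p ∈ endParams a b₁ b₂ ↔ p.1 ≠ a ∧ p.2 ≠ b₁ ∧ p.2 ≠ b₂ := by
  simp [endParams, not_or]

theorem card_endParams (a : α) (hb : b₁ ≠ b₂) :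
    #(endParams a b₁ b₂) = (Fintype.card α - 1) * (Fintype.card β - 2) := by
  rw [endParams, card_product, card_erase_of_mem (mem_univ a), card_univ, card_univ_sdiff,
    card_pair hb]

theorem injective_endPath_iff (hb : b₁ ≠ b₂) {x : α} {y : β} :
    Injective (endPath a b₁ b₂ x y) ↔ (x, y) ∈ endParams a b₁ b₂ := by
  simp only [endPath, coe_pathGraphHomOfAdj, Matrix.vecCons, Fin.cons_injective_iff]
  simp [mem_endParams, injective_of_subsingleton, hb]
  grind

theorem map_top_endPath_mem (hb : b₁ ≠ b₂) {p : α × β} (hp : p ∈ endParams a b₁ b₂) :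
    (⊤ : Subgraph _).map (endPath a b₁ b₂ p.1 p.2) ∈
      (completeBipartiteGraph α β).copiesContaining (pathGraph 5)
        s(inl a, inr b₁) s(inl a, inr b₂) :=
  ⟨nonempty_iso_map_top ((injective_endPath_iff hb).mpr hp),
    by simp only [edgeSet_map_top_pathGraph_five]; simp [endPath]⟩

theorem injOn_map_top_endPath :
    Set.InjOn (fun p : α × β => (⊤ : Subgraph _).map (endPath a b₁ b₂ p.1 p.2))
      (endParams a b₁ b₂) := by
  rintro ⟨x, y⟩ hp ⟨x', y'⟩ - h
  obtain ⟨hx, -, hy⟩ := mem_endParams.mp hp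
  dsimp only at h
  have h₁ : s(inr b₂, inl x) ∈ ((⊤ : Subgraph _).map (endPath a b₁ b₂ x' y')).edgeSet :=
    h ▸ by simp only [edgeSet_map_top_pathGraph_five]; simp [endPath]
  have h₂ : s(inl x, inr y) ∈ ((⊤ : Subgraph _).map (endPath a b₁ b₂ x' y')).edgeSet :=
    h ▸ by simp only [edgeSet_map_top_pathGraph_five]; simp [endPath]
  simp only [edgeSet_map_top_pathGraph_five] at h₁ h₂
  simp [endPath, hx, hy] at h₁ h₂
  grind

theorem exists_endPath_eq_toSubgraph (hb : b₁ ≠ b₂)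
    (f : Copy (pathGraph 5) (completeBipartiteGraph α β))
    (h₀ : f 0 = inr b₁) (h₁ : f 1 = inl a) (h₂ : f 2 = inr b₂) :
    ∃ p ∈ endParams a b₁ b₂, (⊤ : Subgraph _).map (endPath a b₁ b₂ p.1 p.2) = f.toSubgraph := by
  obtain ⟨x, h₃⟩ := exists_eq_inl_of_adj_inr (v := f 3) (b := b₂) <| by
    simpa [h₂] using f.toHom.map_adj (show (pathGraph 5).Adj 3 2 by simp [pathGraph_adj])
  obtain ⟨y, h₄⟩ := exists_eq_inr_of_adj_inl (v := f 4) (a := x) <| by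
    simpa [h₃] using f.toHom.map_adj (show (pathGraph 5).Adj 4 3 by simp [pathGraph_adj])
  have hf : ⇑(endPath a b₁ b₂ x y) = f := by
    ext i
    fin_cases i <;> simp [endPath, *]
  exact ⟨(x, y), (injective_endPath_iff hb).mp (hf ▸ f.injective),
    congrArg (Subgraph.map · ⊤) (DFunLike.coe_injective hf)⟩

theorem exists_eq_of_mem_copiesContaining (hb : b₁ ≠ b₂) {H : (completeBipartiteGraph α β).Subgraph}
    (hH : H ∈ (completeBipartiteGraph α β).copiesContaining (pathGraph 5)
      s(inl a, inr b₁) s(inl a, inr b₂)) :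
    (∃ p ∈ middleParams a, (⊤ : Subgraph _).map (middlePath a b₁ b₂ p.1 p.2) = H) ∨
    (∃ p ∈ endParams a b₁ b₂, (⊤ : Subgraph _).map (endPath a b₁ b₂ p.1 p.2) = H) ∨
    (∃ p ∈ endParams a b₂ b₁, (⊤ : Subgraph _).map (endPath a b₂ b₁ p.1 p.2) = H) := by
  obtain ⟨⟨φ⟩, h₁, h₂⟩ := hH
  obtain ⟨f, rfl⟩ : H ∈ Set.range (Copy.toSubgraph (A := pathGraph 5)) := by
    rw [Copy.range_toSubgraph]
    exact ⟨φ.symm⟩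
  rw [Subgraph.mem_edgeSet, Subgraph.map_adj] at h₁ h₂
  obtain ⟨i, j, hij, hi, hj⟩ := h₁
  obtain ⟨i', j', hij', hi', hj'⟩ := h₂
  obtain rfl : i = i' := f.injective (hi.trans hi'.symm)
  have hjj : j ≠ j' := by rintro rfl; exact hb (inr_injective (hj.symm.trans hj'))
  have hrev := f.toSubgraph_comp_iso_s10 (pathGraphRevIso 5)
  set g := f.comp (pathGraphRevIso 5).toCopy
  -- in the last three cases it is the reversed copy `g` that has one of the three normal forms
  rcases pathGraph_five_eq_of_adj_of_adj hij hij' hjj with ⟨rfl, rfl, rfl⟩ | ⟨rfl, rfl, rfl⟩ |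
    ⟨rfl, rfl, rfl⟩ | ⟨rfl, rfl, rfl⟩ | ⟨rfl, rfl, rfl⟩ | ⟨rfl, rfl, rfl⟩
  · exact .inr (.inl (exists_endPath_eq_toSubgraph hb f hj hi hj'))
  · exact .inr (.inr (exists_endPath_eq_toSubgraph hb.symm f hj' hi hj))
  · exact .inl (exists_middlePath_eq_toSubgraph hb f hj hi hj')
  · exact .inl (hrev ▸ exists_middlePath_eq_toSubgraph hb g hj hi hj')
  · exact .inr (.inr (hrev ▸ exists_endPath_eq_toSubgraph hb.symm g hj' hi hj))
  · exact .inr (.inl (hrev ▸ exists_endPath_eq_toSubgraph hb g hj hi hj'))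

theorem natCard_copiesContaining_pathGraph_five (hb : b₁ ≠ b₂) :
    Nat.card ((completeBipartiteGraph α β).copiesContaining (pathGraph 5)
      s(inl a, inr b₁) s(inl a, inr b₂)) =
      (Fintype.card α - 1) * (Fintype.card α - 2) +
        2 * ((Fintype.card α - 1) * (Fintype.card β - 2)) := by
  let F : middleParams a ⊕ endParams a b₁ b₂ ⊕ endParams a b₂ b₁ →
      (completeBipartiteGraph α β).copiesContaining (pathGraph 5)
        s(inl a, inr b₁) s(inl a, inr b₂) :=
    Sum.elim (fun p => ⟨_, map_top_middlePath_mem hb p.2⟩) <|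
      Sum.elim (fun p => ⟨_, map_top_endPath_mem hb p.2⟩)
        (fun p => ⟨_, copiesContaining_comm .. ▸ map_top_endPath_mem hb.symm p.2⟩)
  have hF : Bijective F := by
    refine ⟨Injective.sumElim ?_ (Injective.sumElim ?_ ?_ ?_) ?_, ?_⟩
    · exact fun p q h => Subtype.ext (injOn_map_top_middlePath hb p.2 q.2 (congrArg Subtype.val h))
    · exact fun p q h => Subtype.ext (injOn_map_top_endPath p.2 q.2 (congrArg Subtype.val h))
    · exact fun p q h => Subtype.ext (injOn_map_top_endPath p.2 q.2 (congrArg Subtype.val h))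
    · exact fun p q h => map_top_endPath_ne_endPath_swap hb (mem_endParams.mp p.2).1
        (mem_endParams.mp q.2).2.1 (congrArg Subtype.val h)
    · rintro p (⟨q, hq⟩ | ⟨q, hq⟩) h <;> obtain ⟨-, hy, hy'⟩ := mem_endParams.mp hq
      · exact map_top_middlePath_ne_endPath hy hy' _ _ (congrArg Subtype.val h)
      · exact map_top_middlePath_ne_endPath hy' hy _ _ (congrArg Subtype.val h)
    · rintro ⟨H, hH⟩
      rcases exists_eq_of_mem_copiesContaining hb hH with ⟨p, hp, rfl⟩ | ⟨p, hp, rfl⟩ |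
        ⟨p, hp, rfl⟩
      · exact ⟨.inl ⟨p, hp⟩, rfl⟩
      · exact ⟨.inr (.inl ⟨p, hp⟩), rfl⟩
      · exact ⟨.inr (.inr ⟨p, hp⟩), rfl⟩
  rw [← Nat.card_congr (Equiv.ofBijective F hF), Nat.card_sum, Nat.card_sum]
  simp only [Nat.card_eq_fintype_card, Fintype.card_coe, card_middleParams, card_endParams a hb,
    card_endParams a hb.symm]
  ring

end CompleteBipartite

end SimpleGraph

open SimpleGraph Sum

theorem stmt_10_general (t : ℕ) (e1 e2 : Sym2 (Fin t ⊕ Fin t))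
    (he1 : e1 ∈ (completeBipartiteGraph (Fin t) (Fin t)).edgeSet)
    (he2 : e2 ∈ (completeBipartiteGraph (Fin t) (Fin t)).edgeSet)
    (hne : e1 ≠ e2) (hadj : ∃ v : Fin t ⊕ Fin t, v ∈ e1 ∧ v ∈ e2) :
    Nat.card {H : (completeBipartiteGraph (Fin t) (Fin t)).Subgraph //
      Nonempty (H.coe ≃g pathGraph 5) ∧ e1 ∈ H.edgeSet ∧ e2 ∈ H.edgeSet} =
      3 * (t - 1) * (t - 2) := by
  have key (a : Fin t) {b₁ b₂ : Fin t} (hb : b₁ ≠ b₂) :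
      Nat.card ((completeBipartiteGraph (Fin t) (Fin t)).copiesContaining (pathGraph 5)
        s(inl a, inr b₁) s(inl a, inr b₂)) = 3 * (t - 1) * (t - 2) := by
    rw [natCard_copiesContaining_pathGraph_five hb, Fintype.card_fin]
    ring
  obtain ⟨a₁, b₁, rfl⟩ := exists_eq_inl_inr_of_mem_edgeSet he1
  obtain ⟨a₂, b₂, rfl⟩ := exists_eq_inl_inr_of_mem_edgeSet he2
  obtain ⟨v, hv₁, hv₂⟩ := hadj
  rcases Sym2.mem_iff.mp hv₁ with rfl | rfl <;>
    simp only [Sym2.mem_iff, inl.injEq, inr.injEq, reduceCtorEq, or_false, false_or] at hv₂ <;>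
    subst hv₂
  · exact key a₁ fun h => hne (h ▸ rfl)
  · have h := (completeBipartiteGraphComm (Fin t) (Fin t)).natCard_copiesContaining (pathGraph 5)
      s(inl b₁, inr a₁) s(inl b₁, inr a₂)
    rw [map_mk_completeBipartiteGraphComm, map_mk_completeBipartiteGraphComm] at h
    exact h.trans (key b₁ fun h => hne (h ▸ rfl))

theorem stmt_10 (t : ℕ) (ht : 3 ≤ t) (e1 e2 : Sym2 (Fin t ⊕ Fin t))
    (he1 : e1 ∈ (completeBipartiteGraph (Fin t) (Fin t)).edgeSet)
    (he2 : e2 ∈ (completeBipartiteGraph (Fin t) (Fin t)).edgeSet)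
    (hne : e1 ≠ e2) (hadj : ∃ v : Fin t ⊕ Fin t, v ∈ e1 ∧ v ∈ e2) :
    Nat.card {H : (completeBipartiteGraph (Fin t) (Fin t)).Subgraph //
      Nonempty (H.coe ≃g pathGraph 5) ∧ e1 ∈ H.edgeSet ∧ e2 ∈ H.edgeSet} =
      3 * (t - 1) * (t - 2) :=
  stmt_10_general t e1 e2 he1 he2 hne hadj
end
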